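/- For ψ a bounded t-function on Spec ℤ corresponding to (n, U) and W ⊆ ℙ specialization-closed: if W ∩ U = ∅ then μ⁻_W(ψ) is again a t-function, corresponding to (n, U ∪ W); and if W ∩ U ≠ ∅ then μ⁻_W(ψ) is not a t-function. -/

import Mathlib

open scoped Classical

/-- The (right) mutation of a function ψ : Spec R → ℤ at a subset W ⊆ Spec R. -/
noncomputable def mutate {R : Type*} [CommRing R] (W : Set (PrimeSpectrum R))
    (ψ : PrimeSpectrum R → ℤ) : PrimeSpectrum R → ℤ :=
  fun p => if p ∈ W then ψ p + 1 else ψ p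

/-- ψ is a t-function: for every minimal (covering) inclusion of primes 𝔭 ⊊ 𝔮 one has
ψ(𝔭) ≤ ψ(𝔮) ≤ ψ(𝔭) + 1. -/
def IsTFun {R : Type*} [CommRing R] (ψ : PrimeSpectrum R → ℤ) : Prop :=
  ∀ p q : PrimeSpectrum R, p ⋖ q → ψ p ≤ ψ q ∧ ψ q ≤ ψ p + 1

/-- The zero ideal (0) as a point of Spec ℤ. -/
noncomputable def zeroPrime : PrimeSpectrum ℤ := ⟨⊥, Ideal.bot_prime⟩

/-- The ideal (p) generated by a prime number p, as a point of Spec ℤ. -/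
noncomputable def pPrime (p : Nat.Primes) : PrimeSpectrum ℤ :=
  ⟨Ideal.span {((p : ℕ) : ℤ)}, by
    rw [Ideal.span_singleton_prime (by exact_mod_cast p.2.ne_zero)]
    exact Nat.prime_iff_prime_int.mp p.2⟩

/-
Spec ℤ has dimension one, so its only covering relations are (0) ⋖ (p). A function on Spec ℤ
is therefore a t-function exactly when each value ψ((p)) lies in {ψ((0)), ψ((0)) + 1}. Mutating
at a set of closed points leaves ψ((0)) = n alone and raises ψ((p)) by one for p ∈ W: this
stays in {n, n + 1} precisely when p ∉ U, and reaches n + 2 for p ∈ W ∩ U.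
-/

section Mutate

variable {R : Type*} [CommRing R] {W : Set (PrimeSpectrum R)} {ψ : PrimeSpectrum R → ℤ}
  {x : PrimeSpectrum R}

theorem mutate_of_mem (hx : x ∈ W) : mutate W ψ x = ψ x + 1 := if_pos hx

theorem mutate_of_notMem (hx : x ∉ W) : mutate W ψ x = ψ x := if_neg hx

end Mutate

namespace PrimeSpectrum

variable {R : Type*} [CommRing R] [IsDomain R] [Ring.KrullDimLE 1 R]

theorem isMax_of_ne_bot {x : PrimeSpectrum R} (hx : x ≠ ⊥) : IsMax x :=
  isMax_iff.mpr (x.2.isMaximal_of_ne_bot fun h => hx (PrimeSpectrum.ext h))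

theorem covBy_iff_eq_bot_and_ne_bot {p q : PrimeSpectrum R} : p ⋖ q ↔ p = ⊥ ∧ q ≠ ⊥ := by
  constructor
  · intro h
    exact ⟨by_contra fun hp => (isMax_of_ne_bot hp).not_lt h.lt, ne_bot_of_gt h.lt⟩
  · rintro ⟨rfl, hq⟩
    exact ⟨bot_lt_iff_ne_bot.mpr hq, fun r hr hrq => (isMax_of_ne_bot hr.ne').not_lt hrq⟩

end PrimeSpectrum

theorem isTFun_iff_of_krullDimLE_one {R : Type*} [CommRing R] [IsDomain R]
    [Ring.KrullDimLE 1 R] {ψ : PrimeSpectrum R → ℤ} :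
    IsTFun ψ ↔ ∀ q ≠ ⊥, ψ ⊥ ≤ ψ q ∧ ψ q ≤ ψ ⊥ + 1 := by
  simp only [IsTFun, PrimeSpectrum.covBy_iff_eq_bot_and_ne_bot, and_imp]
  exact ⟨fun h q hq => h ⊥ q rfl hq, fun h p q hp hq => hp ▸ h q hq⟩

theorem zeroPrime_eq_bot : zeroPrime = ⊥ := rfl

theorem pPrime_ne_bot (p : Nat.Primes) : pPrime p ≠ ⊥ := fun h => by
  have : Ideal.span {((p : ℕ) : ℤ)} = ⊥ := congrArg PrimeSpectrum.asIdeal h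
  rw [Ideal.span_singleton_eq_bot] at this
  exact p.2.ne_zero (by exact_mod_cast this)

theorem pPrime_injective : Function.Injective pPrime := fun p q h => by
  have : Ideal.span {((p : ℕ) : ℤ)} = Ideal.span {((q : ℕ) : ℤ)} :=
    congrArg PrimeSpectrum.asIdeal h
  rw [Ideal.span_singleton_eq_span_singleton, Int.associated_iff_natAbs] at this
  exact Subtype.ext (by simpa using this)

theorem exists_eq_pPrime_of_ne_bot {x : PrimeSpectrum ℤ} (hx : x ≠ ⊥) :
    ∃ p : Nat.Primes, x = pPrime p := by
  obtain ⟨a, ha⟩ := (IsPrincipalIdealRing.principal x.asIdeal).1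
  rw [Ideal.submodule_span_eq] at ha
  have ha0 : a ≠ 0 := by
    rintro rfl
    exact hx (PrimeSpectrum.ext (by rw [ha, Ideal.span_singleton_eq_bot.mpr rfl]; rfl))
  have ha_prime : Prime a := by
    rw [← Ideal.span_singleton_prime ha0, ← ha]
    exact x.2
  refine ⟨⟨a.natAbs, Int.prime_iff_natAbs_prime.mp ha_prime⟩, PrimeSpectrum.ext ?_⟩
  rw [ha]
  exact Ideal.span_singleton_eq_span_singleton.mpr (Int.associated_natAbs a)

theorem isTFun_int_iff {ψ : PrimeSpectrum ℤ → ℤ} :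
    IsTFun ψ ↔ ∀ p : Nat.Primes,
      ψ zeroPrime ≤ ψ (pPrime p) ∧ ψ (pPrime p) ≤ ψ zeroPrime + 1 := by
  rw [isTFun_iff_of_krullDimLE_one, zeroPrime_eq_bot]
  constructor
  · exact fun h p => h _ (pPrime_ne_bot p)
  · intro h q hq
    obtain ⟨p, rfl⟩ := exists_eq_pPrime_of_ne_bot hq
    exact h p

/-- for the bounded t-function ψ on Spec ℤ corresponding to (n, U) and a
specialization-closed W ⊆ ℙ: if W ∩ U = ∅ then μ⁻_W(ψ) is again a t-function,
corresponding to (n, U ∪ W), while if W ∩ U ≠ ∅ then μ⁻_W(ψ) is not a t-function. -/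
theorem mutation_tfun_iff_disjoint (n : ℤ) (U Wp : Set Nat.Primes)
    (ψ : PrimeSpectrum ℤ → ℤ) (hψ0 : ψ zeroPrime = n)
    (hψp : ∀ p : Nat.Primes, ψ (pPrime p) = if p ∈ U then n + 1 else n) :
    (Wp ∩ U = ∅ →
      IsTFun (mutate (pPrime '' Wp) ψ) ∧
      mutate (pPrime '' Wp) ψ zeroPrime = n ∧
      ∀ p : Nat.Primes, mutate (pPrime '' Wp) ψ (pPrime p) =
        if p ∈ U ∪ Wp then n + 1 else n) ∧
    (Wp ∩ U ≠ ∅ → ¬ IsTFun (mutate (pPrime '' Wp) ψ)) := by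
  have hW : ∀ p, pPrime p ∈ pPrime '' Wp ↔ p ∈ Wp := fun p => pPrime_injective.mem_set_image
  have h0 : mutate (pPrime '' Wp) ψ zeroPrime = n := by
    have hz : zeroPrime ∉ pPrime '' Wp := fun ⟨p, _, hp⟩ => pPrime_ne_bot p hp
    rw [mutate_of_notMem hz, hψ0]
  constructor
  · intro hdisj
    have hp : ∀ p, mutate (pPrime '' Wp) ψ (pPrime p) = if p ∈ U ∪ Wp then n + 1 else n := by
      intro p
      by_cases hw : p ∈ Wp
      · have hu : p ∉ U := fun hu => (Set.eq_empty_iff_forall_notMem.mp hdisj) p ⟨hw, hu⟩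
        simp [mutate_of_mem ((hW p).2 hw), hψp, hu, hw]
      · by_cases hu : p ∈ U <;> simp [mutate_of_notMem (mt (hW p).1 hw), hψp, hu, hw]
    refine ⟨isTFun_int_iff.mpr fun p => ?_, h0, hp⟩
    rw [h0, hp]
    split_ifs <;> omega
  · intro hne hT
    obtain ⟨p, hw, hu⟩ := Set.nonempty_iff_ne_empty.mpr hne
    have hbound := (isTFun_int_iff.mp hT p).2
    rw [h0, mutate_of_mem ((hW p).2 hw), hψp, if_pos hu] at hbound
    omega
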